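/- Let Ψ : B(H) → B(K) be a unital positive linear map and T ∈ B(H) self-adjoint. Define δ = sup over unit vectors x ∈ K of (⟨Ψ(T²) x, x⟩ − ⟨Ψ(T) x, x⟩²). Then Ψ(T²) ≤ Ψ(T)² + 2δ·1_K. -/

import Mathlib

/-!
For a unit vector `u`, `S ↦ re ⟪Ψ S u, u⟫` is a state, and applying it to `(T - c)² ≥ 0` with
`c = re ⟪Ψ T u, u⟫` gives `re ⟪Ψ T u, u⟫² ≤ re ⟪Ψ (T²) u, u⟫`; hence `δ ≥ 0`. Since `Ψ T` is
self-adjoint, `re ⟪Ψ T u, u⟫² ≤ ‖Ψ T u‖² = re ⟪(Ψ T)² u, u⟫`, so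
`re ⟪Ψ (T²) u, u⟫ ≤ re ⟪((Ψ T)² + δ) u, u⟫` on the unit sphere, and by homogeneity
`Ψ (T²) ≤ (Ψ T)² + δ ≤ (Ψ T)² + 2δ`.
-/

open scoped InnerProductSpace
open RCLike ContinuousLinearMap

namespace ContinuousLinearMap

section RCLike

variable {𝕜 E : Type*} [RCLike 𝕜] [NormedAddCommGroup E] [InnerProductSpace 𝕜 E]

theorem reApplyInnerSelf_le_norm (S : E →L[𝕜] E) {u : E} (hu : ‖u‖ = 1) :
    S.reApplyInnerSelf u ≤ ‖S‖ :=
  (re_inner_le_norm _ _).trans (by simpa [hu] using S.le_opNorm u)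

theorem reApplyInnerSelf_sub (S T : E →L[𝕜] E) (x : E) :
    (S - T).reApplyInnerSelf x = S.reApplyInnerSelf x - T.reApplyInnerSelf x := by
  simp only [reApplyInnerSelf_apply, sub_apply, inner_sub_left, map_sub]

variable [CompleteSpace E]

theorem le_of_forall_norm_eq_one {S T : E →L[𝕜] E} (hS : IsSelfAdjoint S) (hT : IsSelfAdjoint T)
    (h : ∀ u, ‖u‖ = 1 → S.reApplyInnerSelf u ≤ T.reApplyInnerSelf u) : S ≤ T := by
  refine isPositive_def'.2 ⟨hT.sub hS, fun x => ?_⟩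
  rcases eq_or_ne x 0 with rfl | hx
  · simp [reApplyInnerSelf_apply]
  have hx' : (‖x‖ : 𝕜) ≠ 0 := ofReal_ne_zero.2 (norm_ne_zero_iff.2 hx)
  have hu : ‖(‖x‖ : 𝕜)⁻¹ • x‖ = 1 := by
    rw [norm_smul, norm_inv, norm_ofReal, abs_norm, inv_mul_cancel₀ (norm_ne_zero_iff.2 hx)]
  rw [← smul_inv_smul₀ hx' x, reApplyInnerSelf_smul, reApplyInnerSelf_sub]
  exact mul_nonneg (sq_nonneg _) (sub_nonneg.2 (h _ hu))

theorem re_inner_sq_apply_self {S : E →L[𝕜] E} (hS : IsSelfAdjoint S) (x : E) :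
    re ⟪(S ^ 2) x, x⟫_𝕜 = ‖S x‖ ^ 2 := by
  rw [apply_norm_sq_eq_inner_adjoint_left, hS.adjoint_eq, sq]
  rfl

end RCLike

variable {E : Type*} [NormedAddCommGroup E] [InnerProductSpace ℂ E] [CompleteSpace E]

noncomputable def vectorFunctional (u : E) : (E →L[ℂ] E) →ₚ[ℝ] ℝ :=
  .mk₀
    { toFun S := S.reApplyInnerSelf u
      map_add' S T := by simp [reApplyInnerSelf_apply, inner_add_left]
      map_smul' c S := by
        rw [reApplyInnerSelf_apply, reApplyInnerSelf_apply, smul_apply,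
          real_smul_eq_coe_smul (K := ℂ), inner_smul_left, conj_ofReal, re_ofReal_mul]
        rfl }
    fun S hS => ((nonneg_iff_isPositive S).1 hS).re_inner_nonneg_left u

@[simp]
theorem vectorFunctional_apply (u : E) (S : E →L[ℂ] E) :
    vectorFunctional u S = re ⟪S u, u⟫_ℂ := rfl

end ContinuousLinearMap

namespace PositiveLinearMap

variable {A K : Type*} [NormedAddCommGroup K] [InnerProductSpace ℂ K] [CompleteSpace K]

theorem sq_map_le_map_sq [Ring A] [StarRing A] [PartialOrder A] [StarOrderedRing A]
    [Algebra ℝ A] [StarModule ℝ A] (φ : A →ₚ[ℝ] ℝ) (hφ1 : φ 1 = 1) {a : A}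
    (ha : IsSelfAdjoint a) : φ a ^ 2 ≤ φ (a ^ 2) := by
  set c := φ a
  have hexp : (a - c • 1) ^ 2 = a ^ 2 - (2 * c) • a + c ^ 2 • 1 := by
    simp only [sq, sub_mul, mul_sub, smul_mul_assoc, mul_smul_comm, one_mul, mul_one]
    module
  have hsq : 0 ≤ φ ((a - c • 1) ^ 2) :=
    φ.map_nonneg (ha.sub ((IsSelfAdjoint.all c).smul (.one A))).sq_nonneg
  rw [hexp, map_add, map_sub, map_smul, map_smul, hφ1, smul_eq_mul, smul_eq_mul] at hsq
  nlinarith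

theorem sq_re_inner_le_re_inner_map_sq [Ring A] [StarRing A] [PartialOrder A]
    [StarOrderedRing A] [Algebra ℝ A] [StarModule ℝ A] (Ψ : A →ₚ[ℝ] (K →L[ℂ] K))
    (hΨ1 : Ψ 1 = 1) {a : A} (ha : IsSelfAdjoint a) {u : K} (hu : ‖u‖ = 1) :
    re ⟪Ψ a u, u⟫_ℂ ^ 2 ≤ re ⟪Ψ (a ^ 2) u, u⟫_ℂ :=
  ((vectorFunctional u).comp Ψ).sq_map_le_map_sq (by simp [hΨ1, hu]) ha

theorem map_sq_le_sq_add_smul_one [Ring A] [StarRing A] [PartialOrder A] [Module ℝ A]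
    [SelfAdjointDecompose A] (Ψ : A →ₚ[ℝ] (K →L[ℂ] K)) {a : A} (ha : IsSelfAdjoint a) {δ : ℝ}
    (hδ : ∀ u : K, ‖u‖ = 1 → re ⟪Ψ (a ^ 2) u, u⟫_ℂ - re ⟪Ψ a u, u⟫_ℂ ^ 2 ≤ δ) :
    Ψ (a ^ 2) ≤ Ψ a ^ 2 + δ • 1 := by
  have hΨa : IsSelfAdjoint (Ψ a) := ha.map' Ψ
  refine le_of_forall_norm_eq_one ((ha.pow 2).map' Ψ)
    ((hΨa.pow 2).add ((IsSelfAdjoint.all δ).smul (.one _))) fun u hu => ?_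
  have hsq : re ⟪Ψ a u, u⟫_ℂ ^ 2 ≤ ‖Ψ a u‖ ^ 2 := by
    rw [sq_le_sq, abs_norm]
    exact (abs_re_le_norm _).trans (by simpa [hu] using norm_inner_le_norm (𝕜 := ℂ) (Ψ a u) u)
  show re ⟪Ψ (a ^ 2) u, u⟫_ℂ ≤ re ⟪(Ψ a ^ 2 + δ • (1 : K →L[ℂ] K)) u, u⟫_ℂ
  calc re ⟪Ψ (a ^ 2) u, u⟫_ℂ ≤ ‖Ψ a u‖ ^ 2 + δ := by linarith [hδ u hu]
    _ = re ⟪(Ψ a ^ 2 + δ • (1 : K →L[ℂ] K)) u, u⟫_ℂ := by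
      rw [_root_.add_apply, inner_add_left, map_add, re_inner_sq_apply_self hΨa, _root_.smul_apply,
        one_apply_eq_self, real_smul_eq_coe_smul (K := ℂ), inner_smul_left, conj_ofReal,
        re_ofReal_mul, inner_self_eq_norm_sq (𝕜 := ℂ), hu, one_pow, mul_one]

end PositiveLinearMap

/-- Reverse Kadison–Schwarz inequality for self-adjoint `T`. -/
theorem reverse_kadison_schwarz {H K : Type*}
    [NormedAddCommGroup H] [InnerProductSpace ℂ H] [CompleteSpace H]
    [NormedAddCommGroup K] [InnerProductSpace ℂ K] [CompleteSpace K]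
    (Ψ : (H →L[ℂ] H) →ₗ[ℂ] (K →L[ℂ] K))
    (hΨpos : ∀ T : H →L[ℂ] H, T.IsPositive → (Ψ T).IsPositive)
    (hΨ1 : Ψ 1 = 1)
    (T : H →L[ℂ] H) (hT : IsSelfAdjoint T)
    (δ : ℝ)
    (hδ : δ = ⨆ x : {x : K // ‖x‖ = 1},
      (RCLike.re ⟪Ψ (T ^ 2) (x : K), (x : K)⟫_ℂ
        - (RCLike.re ⟪Ψ T (x : K), (x : K)⟫_ℂ) ^ 2)) :
    Ψ (T ^ 2) ≤ Ψ T ^ 2 + (2 * δ) • (1 : K →L[ℂ] K) := by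
  let Ψ' : (H →L[ℂ] H) →ₚ[ℝ] (K →L[ℂ] K) := .mk₀ (Ψ.restrictScalars ℝ) fun S hS =>
    (nonneg_iff_isPositive _).2 (hΨpos S ((nonneg_iff_isPositive S).1 hS))
  have hbdd : BddAbove (Set.range fun x : {x : K // ‖x‖ = 1} =>
      re ⟪Ψ (T ^ 2) x, x⟫_ℂ - re ⟪Ψ T x, x⟫_ℂ ^ 2) :=
    ⟨‖Ψ (T ^ 2)‖, Set.forall_mem_range.2 fun x =>
      (sub_le_self _ (sq_nonneg _)).trans ((Ψ (T ^ 2)).reApplyInnerSelf_le_norm x.2)⟩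
  have hδ₀ : 0 ≤ δ := hδ ▸ Real.iSup_nonneg fun x =>
    sub_nonneg.2 (Ψ'.sq_re_inner_le_re_inner_map_sq hΨ1 hT x.2)
  calc Ψ (T ^ 2) ≤ Ψ T ^ 2 + δ • 1 :=
        Ψ'.map_sq_le_sq_add_smul_one hT fun u hu => hδ ▸ le_ciSup hbdd ⟨u, hu⟩
    _ ≤ Ψ T ^ 2 + (2 * δ) • 1 := by gcongr; linarith
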